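/- arXiv:2410.16514 — 2 statements merged into one kernel-verified Lean document; each statement's English description precedes it below -/
import Mathlib

section
/- Let M be a symmetric invertible 2×2 matrix over a field with diagonal entries a, d (d ≠ 0), q = a/d, Q₁ = diag(1,-q), Q₂ = diag(q,-1), J = [[0,-1],[1,0]]. Suppose M f₊ = f₋ and M s₊ = s₋ for vectors f±, s±, and suppose r₁, r₂ are scalars with r₁ ≠ 0 such that s₊ = r₁⁻¹ • (r₂ • f₊ + J Q₂ f₊). Then s₋ = r₁⁻¹ • (r₂ • f₋ + J Q₁ f₋). -/
open Matrix

/-! Since `q * d = a`, the symmetric matrix `M` intertwines the two maps: `M J Q₂ = J Q₁ M`.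
Applying `M` to the relation defining `s₊` therefore turns it into the claimed relation for
`s₋ = M s₊` in terms of `f₋ = M f₊`. -/

theorem Matrix.mulVec_smul_smul_add_mulVec_of_mul_eq {n R : Type*} [Fintype n] [CommRing R]
    {M A B : Matrix n n R} (h : M * A = B * M) (c r : R) (v : n → R) :
    M *ᵥ (c • (r • v + A *ᵥ v)) = c • (r • (M *ᵥ v) + B *ᵥ (M *ᵥ v)) := by
  rw [mulVec_smul, mulVec_add, mulVec_smul, mulVec_mulVec, h, ← mulVec_mulVec]

theorem Matrix.fin_two_symm_mul_J_mul_diag {K : Type*} [CommRing K] {a b d q : K}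
    (hq : q * d = a) :
    !![a, b; b, d] * (!![0, -1; 1, 0] * !![q, 0; 0, -1]) =
      (!![0, -1; 1, 0] * !![1, 0; 0, -q]) * !![a, b; b, d] := by
  simp only [mul_fin_two]
  ext i j
  fin_cases i <;> fin_cases j <;> simp [← hq] <;> ring

theorem stmt_7_general {K : Type*} [Field K] (a b d : K) (hd : d ≠ 0)
    (fp fm sp sm : Fin 2 → K) (r₁ r₂ : K)
    (hf : (!![a, b; b, d] : Matrix (Fin 2) (Fin 2) K).mulVec fp = fm)
    (hs : (!![a, b; b, d] : Matrix (Fin 2) (Fin 2) K).mulVec sp = sm)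
    (hrel : sp = r₁⁻¹ • (r₂ • fp +
      (!![0, -1; 1, 0] : Matrix (Fin 2) (Fin 2) K).mulVec
        ((!![a / d, 0; 0, -1] : Matrix (Fin 2) (Fin 2) K).mulVec fp))) :
    sm = r₁⁻¹ • (r₂ • fm +
      (!![0, -1; 1, 0] : Matrix (Fin 2) (Fin 2) K).mulVec
        ((!![1, 0; 0, -(a / d)] : Matrix (Fin 2) (Fin 2) K).mulVec fm)) := by
  have hM := fin_two_symm_mul_J_mul_diag (b := b) (div_mul_cancel₀ a hd)
  subst hf hs hrel
  simpa only [mulVec_mulVec, Matrix.mul_assoc] using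
    mulVec_smul_smul_add_mulVec_of_mul_eq hM r₁⁻¹ r₂ fp

theorem stmt_7 {K : Type*} [Field K] (a b d : K) (hd : d ≠ 0)
    (hdet : a * d - b ^ 2 ≠ 0) (fp fm sp sm : Fin 2 → K) (r₁ r₂ : K) (hr₁ : r₁ ≠ 0)
    (hf : (!![a, b; b, d] : Matrix (Fin 2) (Fin 2) K).mulVec fp = fm)
    (hs : (!![a, b; b, d] : Matrix (Fin 2) (Fin 2) K).mulVec sp = sm)
    (hrel : sp = r₁⁻¹ • (r₂ • fp +
      (!![0, -1; 1, 0] : Matrix (Fin 2) (Fin 2) K).mulVec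
        ((!![a / d, 0; 0, -1] : Matrix (Fin 2) (Fin 2) K).mulVec fp))) :
    sm = r₁⁻¹ • (r₂ • fm +
      (!![0, -1; 1, 0] : Matrix (Fin 2) (Fin 2) K).mulVec
        ((!![1, 0; 0, -(a / d)] : Matrix (Fin 2) (Fin 2) K).mulVec fm)) :=
  stmt_7_general a b d hd fp fm sp sm r₁ r₂ hf hs hrel
end

section
/- Let c, s ∈ ℂ with c² - s² = 1 and let m₊, m₋ be nonzero complex numbers, ω = m₋m₊. Define M(ω) as before, s₊ = (sc(m₊ - m₊⁻¹), c²m₊⁻¹ - s²m₊), s₋ = (sc(m₋⁻¹ + m₋), s²m₋⁻¹ + c²m₋). Then M(ω) s₊ = s₋, and moreover the matrix with columns f₊ = (c²m₊ - s²m₊⁻¹, sc(m₊⁻¹ - m₊)) and s₊ has determinant 1. -/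
/-!
With `B = !![c, s; s, c]` (a Lorentz boost when `c = cosh t`, `s = sinh t`) one has
`M(ω) = B · diag(ω⁻¹, ω) · B`. Since `c² - s² = 1`, `B s₊ = (s m₊, c m₊⁻¹)`; the diagonal factor
turns this into `(s m₋⁻¹, c m₋)`, which `B` maps to `s₋`. The determinant of `(f₊ | s₊)` equals
`m₊ m₊⁻¹ (c² - s²)²`.
-/

open Matrix

section LorentzBoost

variable {R : Type*} [CommRing R]

def lorentzBoost (c s : R) : Matrix (Fin 2) (Fin 2) R := !![c, s; s, c]

theorem lorentzBoost_mul_diagonal_mul_lorentzBoost (c s u v : R) :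
    lorentzBoost c s * diagonal ![u, v] * lorentzBoost c s =
      !![c ^ 2 * u + s ^ 2 * v, c * s * (u + v); c * s * (u + v), c ^ 2 * v + s ^ 2 * u] := by
  ext i j
  fin_cases i <;> fin_cases j <;>
    simp [lorentzBoost, mul_apply, Fin.sum_univ_two, vecMul_diagonal] <;> ring

theorem lorentzBoost_mulVec_of_sq_sub_sq {c s : R} (h : c ^ 2 - s ^ 2 = 1) (a b : R) :
    lorentzBoost c s *ᵥ ![s * c * (a - b), c ^ 2 * b - s ^ 2 * a] = ![s * a, c * b] := by
  ext i
  fin_cases i <;> simp [lorentzBoost, mulVec, dotProduct, Fin.sum_univ_two]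
  · linear_combination s * a * h
  · linear_combination c * b * h

theorem lorentzBoost_mulVec (c s a b : R) :
    lorentzBoost c s *ᵥ ![s * b, c * a] = ![s * c * (b + a), s ^ 2 * b + c ^ 2 * a] := by
  ext i
  fin_cases i <;> simp [lorentzBoost, mulVec, dotProduct, Fin.sum_univ_two] <;> ring

theorem det_eq_mul_sq_sub_sq (c s a b : R) :
    !![c ^ 2 * a - s ^ 2 * b, s * c * (a - b); s * c * (b - a), c ^ 2 * b - s ^ 2 * a].det =
      a * b * (c ^ 2 - s ^ 2) ^ 2 := by
  rw [det_fin_two_of]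
  ring

end LorentzBoost

theorem stmt_17_general (c s mp mm : ℂ) (h : c ^ 2 - s ^ 2 = 1) (hmp : mp ≠ 0) :
    let ω : ℂ := mm * mp
    let fp : Fin 2 → ℂ := ![c ^ 2 * mp - s ^ 2 * mp⁻¹, s * c * (mp⁻¹ - mp)]
    let sp : Fin 2 → ℂ := ![s * c * (mp - mp⁻¹), c ^ 2 * mp⁻¹ - s ^ 2 * mp]
    (!![c ^ 2 * ω⁻¹ + s ^ 2 * ω, c * s * (ω⁻¹ + ω);
       c * s * (ω⁻¹ + ω), c ^ 2 * ω + s ^ 2 * ω⁻¹] : Matrix (Fin 2) (Fin 2) ℂ).mulVec sp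
        = ![s * c * (mm⁻¹ + mm), s ^ 2 * mm⁻¹ + c ^ 2 * mm]
    ∧ (Matrix.of ![![fp 0, sp 0], ![fp 1, sp 1]] : Matrix (Fin 2) (Fin 2) ℂ).det = 1 := by
  intro ω fp sp
  have hdiag : diagonal ![ω⁻¹, ω] *ᵥ ![s * mp, c * mp⁻¹] = ![s * mm⁻¹, c * mm] := by
    ext i
    fin_cases i <;> simp [ω] <;> field_simp
  constructor
  · rw [← lorentzBoost_mul_diagonal_mul_lorentzBoost, ← mulVec_mulVec, ← mulVec_mulVec,
      lorentzBoost_mulVec_of_sq_sub_sq h, hdiag, lorentzBoost_mulVec]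
  · exact (det_eq_mul_sq_sub_sq c s mp mp⁻¹).trans (by simp [mul_inv_cancel₀ hmp, h])

theorem stmt_17 (c s mp mm : ℂ) (h : c ^ 2 - s ^ 2 = 1) (hmp : mp ≠ 0) (hmm : mm ≠ 0) :
    let ω : ℂ := mm * mp
    let fp : Fin 2 → ℂ := ![c ^ 2 * mp - s ^ 2 * mp⁻¹, s * c * (mp⁻¹ - mp)]
    let sp : Fin 2 → ℂ := ![s * c * (mp - mp⁻¹), c ^ 2 * mp⁻¹ - s ^ 2 * mp]
    (!![c ^ 2 * ω⁻¹ + s ^ 2 * ω, c * s * (ω⁻¹ + ω);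
       c * s * (ω⁻¹ + ω), c ^ 2 * ω + s ^ 2 * ω⁻¹] : Matrix (Fin 2) (Fin 2) ℂ).mulVec sp
        = ![s * c * (mm⁻¹ + mm), s ^ 2 * mm⁻¹ + c ^ 2 * mm]
    ∧ (Matrix.of ![![fp 0, sp 0], ![fp 1, sp 1]] : Matrix (Fin 2) (Fin 2) ℂ).det = 1 :=
  stmt_17_general c s mp mm h hmp
end
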